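/- arXiv:2507.02356 — 6 statements merged into one kernel-verified Lean document; each statement's English description precedes it below -/
import Mathlib

section
/- Let S be a finite state set and A a finite set of actions in ℝ^d. Fix γ ∈ [0,1), behavior weights p_D(a∣s) ≥ 0 with Σ_{a∈A} p_D(a∣s) = 1 for each s ∈ S, transition weights p_D(s'∣s,a) ≥ 0 with Σ_{s'∈S} p_D(s'∣s,a) = 1, a reward function R : S × A → ℝ, a policy π(ā∣s') ≥ 0 with Σ_{ā∈A} π(ā∣s') = 1, and a strictly positive kernel q_σ : A × A → ℝ_{>0}. Suppose Q^π : S × A → ℝ satisfies the NAMDP Bellman evaluation equation Q^π(s,a') = R_σ(s,a') + γ Σ_{s'} P_σ(s'∣s,a') Σ_{ā} π(ā∣s') Q^π(s',ā) for all (s,a'). If Q : S × A → ℝ is such that for every (s,a'), the value x = Q(s,a') minimizes x ↦ Σ_{a∈A} p_D(a∣s) q_σ(a'∣a) (x − y(s,a,a'))², where y(s,a,a') = Σ_{s'} p_D(s'∣s,a) (R(s,a) − ‖a−a'‖² + γ Σ_{ā} π(ā∣s') Q^π(s',ā)), then Q = Q^π. -/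
/-- **PANI Objective (Theorem 1), finite state–action form.**
If `Qπ` is the Q-value function of the policy `pol` in the Noisy Action MDP
(defined by the posterior weights `w`, reward `Rσ` and transitions `Pσ`), and
`Q` pointwise minimizes the penalized noisy-action regression objective, then
`Q = Qπ`. -/
theorem pani_objective_eq_namdp_qvalue
    {S A : Type*} [Fintype S] [Fintype A] [Nonempty S] [Nonempty A]
    {d : ℕ} (ι : A → EuclideanSpace ℝ (Fin d))
    (γ : ℝ) (hγ0 : 0 ≤ γ) (hγ1 : γ < 1)
    (pDa : S → A → ℝ) (hpDa0 : ∀ s a, 0 ≤ pDa s a) (hpDa1 : ∀ s, ∑ a, pDa s a = 1)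
    (pDs : S → A → S → ℝ) (hpDs0 : ∀ s a s', 0 ≤ pDs s a s')
    (hpDs1 : ∀ s a, ∑ s', pDs s a s' = 1)
    (R : S → A → ℝ)
    (pol : S → A → ℝ) (hpol0 : ∀ s' abar, 0 ≤ pol s' abar) (hpol1 : ∀ s', ∑ abar, pol s' abar = 1)
    (q : A → A → ℝ) (hq : ∀ a' a, 0 < q a' a)
    (w : S → A → A → ℝ)
    (hw : ∀ s a' a, w s a' a = q a' a * pDa s a / ∑ b, q a' b * pDa s b)
    (Rσ : S → A → ℝ)
    (hRσ : ∀ s a', Rσ s a' = ∑ a, w s a' a * (R s a - ‖ι a - ι a'‖ ^ 2))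
    (Pσ : S → A → S → ℝ)
    (hPσ : ∀ s a' s', Pσ s a' s' = ∑ a, pDs s a s' * w s a' a)
    (Qπ : S → A → ℝ)
    (hQπ : ∀ s a', Qπ s a' =
      Rσ s a' + γ * ∑ s', Pσ s a' s' * ∑ abar, pol s' abar * Qπ s' abar)
    (y : S → A → A → ℝ)
    (hy : ∀ s a a', y s a a' =
      ∑ s', pDs s a s' *
        (R s a - ‖ι a - ι a'‖ ^ 2 + γ * ∑ abar, pol s' abar * Qπ s' abar))
    (Q : S → A → ℝ)
    (hQ : ∀ s a' x,
      (∑ a, pDa s a * q a' a * (Q s a' - y s a a') ^ 2) ≤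
        ∑ a, pDa s a * q a' a * (x - y s a a') ^ 2) :
    Q = Qπ := by
  classical
  funext s a'
  set Z : ℝ := ∑ b, q a' b * pDa s b with hZdef
  have hZpos : 0 < Z := by
    apply Finset.sum_pos'
    · intro b _
      exact mul_nonneg (hq a' b).le (hpDa0 s b)
    · have h1 : (∑ _b : A, (0:ℝ)) < ∑ b, pDa s b := by
        rw [hpDa1]; simp
      obtain ⟨b, -, hb⟩ := Finset.exists_lt_of_sum_lt h1
      exact ⟨b, Finset.mem_univ b, mul_pos (hq a' b) hb⟩
  have hZne : Z ≠ 0 := hZpos.ne'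
  -- c a : the regression weight
  have hwc : ∀ a, w s a' a = pDa s a * q a' a / Z := by
    intro a
    rw [hw, ← hZdef, mul_comm]
  have hZc : Z = ∑ a, pDa s a * q a' a := by
    rw [hZdef]; exact Finset.sum_congr rfl fun a _ => mul_comm _ _
  -- simplify y
  have hy' : ∀ a, y s a a' =
      (R s a - ‖ι a - ι a'‖ ^ 2) +
        γ * ∑ s', pDs s a s' * ∑ abar, pol s' abar * Qπ s' abar := by
    intro a
    rw [hy]
    rw [show (∑ s', pDs s a s' *
        (R s a - ‖ι a - ι a'‖ ^ 2 + γ * ∑ abar, pol s' abar * Qπ s' abar))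
      = (∑ s', pDs s a s') * (R s a - ‖ι a - ι a'‖ ^ 2)
        + γ * ∑ s', pDs s a s' * ∑ abar, pol s' abar * Qπ s' abar from by
        rw [Finset.sum_mul, Finset.mul_sum, ← Finset.sum_add_distrib]
        exact Finset.sum_congr rfl fun s' _ => by ring]
    rw [hpDs1, one_mul]
  -- B = weighted sum of targets; show B = Z * Qπ s a'
  have hB : (∑ a, (pDa s a * q a' a) * y s a a') = Z * Qπ s a' := by
    rw [hQπ s a']
    simp_rw [hRσ, hPσ, hwc, hy']
    simp_rw [mul_add, Finset.mul_sum, Finset.sum_mul, Finset.sum_add_distrib]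
    congr 1
    · refine Finset.sum_congr rfl fun a _ => ?_
      field_simp
    · simp_rw [Finset.mul_sum]
      rw [Finset.sum_comm]
      refine Finset.sum_congr rfl fun s' _ => ?_
      rw [Finset.sum_comm]
      refine Finset.sum_congr rfl fun abar _ => ?_
      refine Finset.sum_congr rfl fun a _ => ?_
      field_simp
  have expand : ∀ x : ℝ, (∑ a, pDa s a * q a' a * (x - y s a a') ^ 2)
      = Z * x ^ 2 - 2 * (∑ a, (pDa s a * q a' a) * y s a a') * x
        + ∑ a, (pDa s a * q a' a) * (y s a a') ^ 2 := by
    intro x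
    rw [hZc, Finset.sum_mul, Finset.mul_sum, Finset.sum_mul, ← Finset.sum_sub_distrib,
      ← Finset.sum_add_distrib]
    exact Finset.sum_congr rfl fun a _ => by ring
  set B : ℝ := ∑ a, (pDa s a * q a' a) * y s a a' with hBdef
  have hineq := hQ s a' (B / Z)
  rw [expand, expand] at hineq
  have hZB : Z * (B / Z) = B := mul_div_cancel₀ B hZne
  have hsq : (Q s a' - B / Z) ^ 2 ≤ 0 := by
    have h3 : Z * (B / Z) ^ 2 = B * (B / Z) := by rw [sq, ← mul_assoc, hZB]
    have h4 : Z * (B / Z) * Q s a' = B * Q s a' := by rw [hZB]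
    have h2 : Z * (Q s a' - B / Z) ^ 2 ≤ 0 := by nlinarith [hineq, h3, h4]
    nlinarith [hZpos]
  have hQeq : Q s a' = B / Z := by nlinarith [sq_nonneg (Q s a' - B / Z)]
  rw [hQeq, hB, mul_div_cancel_left₀ _ hZne]
end

section
/- Let S and A be finite nonempty sets, γ ∈ (0,1), μ a probability distribution on S, π(a∣s) a policy (nonnegative, Σ_a π(a∣s) = 1), and let (R, P) and (R_σ, P_σ) be two MDPs on (S, A), where P(·∣s,a) and P_σ(·∣s,a) are probability distributions on S and R, R_σ : S × A → ℝ. Define the trajectory marginals of the first MDP by ρ_0(s,a) = μ(s) π(a∣s) and ρ_{t+1}(s',a') = Σ_{s,a} ρ_t(s,a) P(s'∣s,a) π(a'∣s'), set the discounted visitation d^π(s,a) = Σ_{t=0}^∞ γ^t ρ_t(s,a), and let η(π) = Σ_{s,a} d^π(s,a) R(s,a); define ρ̄_t, d̄^π, and η̄(π) analogously with P replaced by P_σ and R replaced by R_σ. Let r̄_max = max_{s,a} |R_σ(s,a)| and TV(p‖q) = (1/2) Σ_{s'} |p(s') − q(s')|. Then |η(π) − η̄(π)| ≤ ε_r + ε_m,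 where ε_r = Σ_{s,a} d^π(s,a) |R(s,a) − R_σ(s,a)| and ε_m = (2 γ r̄_max / (1−γ)²) Σ_{s,a} d^π(s,a) TV(P(·∣s,a) ‖ P_σ(·∣s,a)). -/
/-!
Pair each state with the action drawn in it: the marginals `ρ_t` then evolve as a Markov chain on
`S × A` with kernel `K((s, a), (s', a')) = P(s' | s, a) π(a' | s')`. Both returns are linear in the
discounted visitations, so `|η - η̄| ≤ ∑ d |R - R_σ| + r̄_max ‖d - d̄‖₁`. One step of the two chains
gives `‖ρ_{t+1} - ρ̄_{t+1}‖₁ ≤ ‖ρ_t - ρ̄_t‖₁ + ∑ ρ_t ‖K - K_σ‖₁`, where `‖K - K_σ‖₁ = ‖P - P_σ‖₁`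
row by row, and since `ρ_0 = ρ̄_0`, discounting this recursion gives
`(1 - γ) ‖d - d̄‖₁ ≤ γ ∑ d ‖P - P_σ‖₁`; finally `1 / (1 - γ) ≤ 1 / (1 - γ)²`.
-/

open Finset Matrix Function

section StochasticVectors

variable {X : Type*} [Fintype X] [DecidableEq X]

theorem vecMul_mem_stdSimplex {x : X → ℝ} {M : Matrix X X ℝ} (hx : x ∈ stdSimplex ℝ X)
    (hM : M ∈ rowStochastic ℝ X) : x ᵥ* M ∈ stdSimplex ℝ X := by
  refine ⟨nonneg_vecMul_of_mem_rowStochastic hM hx.1, ?_⟩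
  simp only [vecMul, dotProduct]
  rw [sum_comm]
  simp only [← mul_sum, sum_row_of_mem_rowStochastic hM, mul_one, hx.2]

theorem mem_stdSimplex_of_succ_eq_vecMul {ρ : ℕ → X → ℝ} {M : Matrix X X ℝ}
    (hM : M ∈ rowStochastic ℝ X) (h0 : ρ 0 ∈ stdSimplex ℝ X)
    (hsucc : ∀ t, ρ (t + 1) = ρ t ᵥ* M) : ∀ t, ρ t ∈ stdSimplex ℝ X
  | 0 => h0
  | t + 1 => hsucc t ▸ vecMul_mem_stdSimplex (mem_stdSimplex_of_succ_eq_vecMul hM h0 hsucc t) hM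

theorem sum_abs_vecMul_sub_vecMul_le {x y : X → ℝ} {M N : Matrix X X ℝ} (hx : ∀ i, 0 ≤ x i)
    (hN : N ∈ rowStochastic ℝ X) :
    ∑ j, |(x ᵥ* M) j - (y ᵥ* N) j| ≤ ∑ i, |x i - y i| + ∑ i, x i * ∑ j, |M i j - N i j| := by
  have hpt : ∀ j, |(x ᵥ* M) j - (y ᵥ* N) j| ≤
      ∑ i, (x i * |M i j - N i j| + |x i - y i| * N i j) := by
    intro j
    have hsplit : (x ᵥ* M) j - (y ᵥ* N) j = ∑ i, (x i * (M i j - N i j) + (x i - y i) * N i j) := by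
      simp only [vecMul, dotProduct, ← sum_sub_distrib]
      exact sum_congr rfl fun i _ => by ring
    rw [hsplit]
    refine (abs_sum_le_sum_abs _ _).trans (sum_le_sum fun i _ => (abs_add_le _ _).trans ?_)
    rw [abs_mul, abs_mul, abs_of_nonneg (hx i), abs_of_nonneg (nonneg_of_mem_rowStochastic hN)]
  calc ∑ j, |(x ᵥ* M) j - (y ᵥ* N) j|
      ≤ ∑ j, ∑ i, (x i * |M i j - N i j| + |x i - y i| * N i j) := sum_le_sum fun j _ => hpt j
    _ = ∑ i, (x i * ∑ j, |M i j - N i j| + |x i - y i|) := by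
      rw [sum_comm]
      simp only [sum_add_distrib, ← mul_sum, sum_row_of_mem_rowStochastic hN, mul_one]
    _ = ∑ i, |x i - y i| + ∑ i, x i * ∑ j, |M i j - N i j| := by rw [sum_add_distrib, add_comm]

end StochasticVectors

section DiscountedSums

variable {γ : ℝ}

theorem summable_pow_mul_of_abs_le {f : ℕ → ℝ} {C : ℝ} (hγ0 : 0 ≤ γ) (hγ1 : γ < 1)
    (hf : ∀ t, |f t| ≤ C) : Summable fun t => γ ^ t * f t :=
  ((summable_geometric_of_lt_one hγ0 hγ1).mul_right C).of_norm_bounded fun t => by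
    rw [Real.norm_eq_abs, abs_mul, abs_of_nonneg (pow_nonneg hγ0 t)]
    exact mul_le_mul_of_nonneg_left (hf t) (pow_nonneg hγ0 t)

theorem abs_tsum_sub_tsum_le {f g : ℕ → ℝ} (hf : Summable f) (hg : Summable g) :
    |∑' t, f t - ∑' t, g t| ≤ ∑' t, |f t - g t| := by
  rw [← hf.tsum_sub hg]
  have hsum : Summable fun t => ‖f t - g t‖ := (hf.sub hg).norm
  simpa only [Real.norm_eq_abs] using norm_tsum_le_tsum_norm hsum

theorem one_sub_mul_tsum_pow_mul_le {Δ E : ℕ → ℝ} (hγ : 0 ≤ γ)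
    (hΔ : Summable fun t => γ ^ t * Δ t) (hE : Summable fun t => γ ^ t * E t) (h0 : Δ 0 ≤ 0)
    (hstep : ∀ t, Δ (t + 1) ≤ Δ t + E t) :
    (1 - γ) * ∑' t, γ ^ t * Δ t ≤ γ * ∑' t, γ ^ t * E t := by
  have hshift : ∑' t, γ ^ (t + 1) * Δ (t + 1) ≤
      γ * ∑' t, γ ^ t * Δ t + γ * ∑' t, γ ^ t * E t := by
    rw [← hΔ.tsum_mul_left, ← hE.tsum_mul_left, ← (hΔ.mul_left γ).tsum_add (hE.mul_left γ)]
    refine ((summable_nat_add_iff 1).mpr hΔ).tsum_le_tsum (fun t => ?_)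
      ((hΔ.mul_left γ).add (hE.mul_left γ))
    calc γ ^ (t + 1) * Δ (t + 1) ≤ γ ^ (t + 1) * (Δ t + E t) :=
          mul_le_mul_of_nonneg_left (hstep t) (pow_nonneg hγ _)
      _ = γ * (γ ^ t * Δ t) + γ * (γ ^ t * E t) := by ring
  have hsplit := hΔ.tsum_eq_zero_add
  rw [pow_zero, one_mul] at hsplit
  linarith

end DiscountedSums

section Visitation

variable {X : Type*} [Fintype X] {γ : ℝ}

theorem abs_sum_mul_sub_sum_mul_le {d d' r r' : X → ℝ} {C : ℝ} (hd : ∀ x, 0 ≤ d x)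
    (hr' : ∀ x, |r' x| ≤ C) :
    |∑ x, d x * r x - ∑ x, d' x * r' x| ≤ ∑ x, d x * |r x - r' x| + C * ∑ x, |d x - d' x| := by
  calc |∑ x, d x * r x - ∑ x, d' x * r' x|
      = |∑ x, (d x * (r x - r' x) + (d x - d' x) * r' x)| := by
        rw [← sum_sub_distrib]
        exact congrArg abs (sum_congr rfl fun x _ => by ring)
    _ ≤ ∑ x, (d x * |r x - r' x| + |d x - d' x| * C) := by
        refine (abs_sum_le_sum_abs _ _).trans (sum_le_sum fun x _ => (abs_add_le _ _).trans ?_)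
        rw [abs_mul, abs_mul, abs_of_nonneg (hd x)]
        exact add_le_add_right (mul_le_mul_of_nonneg_left (hr' x) (abs_nonneg _)) _
    _ = ∑ x, d x * |r x - r' x| + C * ∑ x, |d x - d' x| := by
        rw [sum_add_distrib, ← sum_mul, mul_comm C]

variable {ρ : ℕ → X → ℝ}

theorem summable_pow_mul_of_mem_stdSimplex (hγ0 : 0 ≤ γ) (hγ1 : γ < 1)
    (hρ : ∀ t, ρ t ∈ stdSimplex ℝ X) (x : X) : Summable fun t => γ ^ t * ρ t x :=
  summable_pow_mul_of_abs_le hγ0 hγ1 fun t =>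
    (abs_of_nonneg ((hρ t).1 x)).trans_le (mem_Icc_of_mem_stdSimplex (hρ t) x).2

theorem tsum_pow_mul_nonneg_of_mem_stdSimplex (hγ0 : 0 ≤ γ) (hρ : ∀ t, ρ t ∈ stdSimplex ℝ X)
    (x : X) : 0 ≤ ∑' t, γ ^ t * ρ t x :=
  tsum_nonneg fun t => mul_nonneg (pow_nonneg hγ0 t) ((hρ t).1 x)

theorem hasSum_pow_mul_sum_mul (hρ : ∀ x, Summable fun t => γ ^ t * ρ t x) (c : X → ℝ) :
    HasSum (fun t => γ ^ t * ∑ x, ρ t x * c x) (∑ x, (∑' t, γ ^ t * ρ t x) * c x) := by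
  simpa only [mul_sum, mul_assoc] using hasSum_sum fun x _ => (hρ x).hasSum.mul_right (c x)

end Visitation

section MarkovChain

variable {X : Type*} [Fintype X] [DecidableEq X] {γ : ℝ} {K K' : Matrix X X ℝ}
  {ρ ρ' : ℕ → X → ℝ}

theorem one_sub_mul_sum_abs_tsum_sub_le (hγ0 : 0 ≤ γ) (hγ1 : γ < 1)
    (hK : K ∈ rowStochastic ℝ X) (hK' : K' ∈ rowStochastic ℝ X) (hρ0 : ρ 0 ∈ stdSimplex ℝ X)
    (h0 : ρ' 0 = ρ 0) (hsucc : ∀ t, ρ (t + 1) = ρ t ᵥ* K)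
    (hsucc' : ∀ t, ρ' (t + 1) = ρ' t ᵥ* K') :
    (1 - γ) * ∑ x, |∑' t, γ ^ t * ρ t x - ∑' t, γ ^ t * ρ' t x| ≤
      γ * ∑ x, (∑' t, γ ^ t * ρ t x) * ∑ y, |K x y - K' x y| := by
  have hρ := mem_stdSimplex_of_succ_eq_vecMul hK hρ0 hsucc
  have hs := summable_pow_mul_of_mem_stdSimplex hγ0 hγ1 hρ
  have hs' := summable_pow_mul_of_mem_stdSimplex hγ0 hγ1
    (mem_stdSimplex_of_succ_eq_vecMul hK' (h0 ▸ hρ0) hsucc')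
  have habs : ∀ t x, |γ ^ t * ρ t x - γ ^ t * ρ' t x| = γ ^ t * |ρ t x - ρ' t x| := fun t x => by
    rw [← mul_sub, abs_mul, abs_of_nonneg (pow_nonneg hγ0 t)]
  have hΔ : HasSum (fun t => γ ^ t * ∑ x, |ρ t x - ρ' t x|)
      (∑ x, ∑' t, γ ^ t * |ρ t x - ρ' t x|) := by
    refine (hasSum_sum fun x _ => ?_).congr_fun fun t => mul_sum _ _ _
    simpa only [habs] using ((hs x).sub (hs' x)).abs.hasSum
  have hE := hasSum_pow_mul_sum_mul hs fun x => ∑ y, |K x y - K' x y|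
  have hrec := one_sub_mul_tsum_pow_mul_le hγ0 hΔ.summable hE.summable (by simp [h0])
    fun t => by rw [hsucc, hsucc']; exact sum_abs_vecMul_sub_vecMul_le (hρ t).1 hK'
  rw [hΔ.tsum_eq, hE.tsum_eq] at hrec
  refine (mul_le_mul_of_nonneg_left (sum_le_sum fun x _ => ?_) (by linarith)).trans hrec
  simpa only [habs] using abs_tsum_sub_tsum_le (hs x) (hs' x)

theorem abs_sum_visitation_mul_sub_le (hγ0 : 0 ≤ γ) (hγ1 : γ < 1)
    (hK : K ∈ rowStochastic ℝ X) (hK' : K' ∈ rowStochastic ℝ X) (hρ0 : ρ 0 ∈ stdSimplex ℝ X)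
    (h0 : ρ' 0 = ρ 0) (hsucc : ∀ t, ρ (t + 1) = ρ t ᵥ* K)
    (hsucc' : ∀ t, ρ' (t + 1) = ρ' t ᵥ* K') {d d' r r' : X → ℝ} {C : ℝ}
    (hd : ∀ x, d x = ∑' t, γ ^ t * ρ t x) (hd' : ∀ x, d' x = ∑' t, γ ^ t * ρ' t x) (hC : 0 ≤ C)
    (hr' : ∀ x, |r' x| ≤ C) :
    |∑ x, d x * r x - ∑ x, d' x * r' x| ≤
      ∑ x, d x * |r x - r' x| + C * γ / (1 - γ) * ∑ x, d x * ∑ y, |K x y - K' x y| := by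
  have hd0 : ∀ x, 0 ≤ d x := fun x => (hd x).symm ▸ tsum_pow_mul_nonneg_of_mem_stdSimplex hγ0
    (mem_stdSimplex_of_succ_eq_vecMul hK hρ0 hsucc) x
  have htv := one_sub_mul_sum_abs_tsum_sub_le hγ0 hγ1 hK hK' hρ0 h0 hsucc hsucc'
  simp only [← hd, ← hd'] at htv
  refine (abs_sum_mul_sub_sum_mul_le hd0 hr').trans (add_le_add le_rfl ?_)
  rw [mul_div_assoc, mul_assoc]
  refine mul_le_mul_of_nonneg_left ?_ hC
  rw [div_mul_eq_mul_div, le_div_iff₀ (by linarith)]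
  linarith

end MarkovChain

section StateAction

variable {S A : Type*} [Fintype S] [Fintype A] {pol : S → A → ℝ}

def stateActionKernel (P : S → A → S → ℝ) (pol : S → A → ℝ) : Matrix (S × A) (S × A) ℝ :=
  fun x y => P x.1 x.2 y.1 * pol y.1 y.2

theorem stateActionKernel_mem_rowStochastic [DecidableEq S] [DecidableEq A] {P : S → A → S → ℝ}
    (hP : ∀ s a, P s a ∈ stdSimplex ℝ S) (hpol : ∀ s, pol s ∈ stdSimplex ℝ A) :
    stateActionKernel P pol ∈ rowStochastic ℝ (S × A) := by
  refine mem_rowStochastic_iff_sum.2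
    ⟨fun x y => mul_nonneg ((hP _ _).1 _) ((hpol _).1 _), fun x => ?_⟩
  simp only [stateActionKernel, Fintype.sum_prod_type, ← mul_sum, (hpol _).2, mul_one, (hP _ _).2]

theorem sum_abs_stateActionKernel_sub (hpol : ∀ s, pol s ∈ stdSimplex ℝ A) (P P' : S → A → S → ℝ)
    (x : S × A) :
    ∑ y, |stateActionKernel P pol x y - stateActionKernel P' pol x y| =
      ∑ s', |P x.1 x.2 s' - P' x.1 x.2 s'| := by
  have hpol1 : ∀ s, ∑ a, |pol s a| = 1 := fun s => by
    rw [← (hpol s).2]; exact sum_congr rfl fun a _ => abs_of_nonneg ((hpol s).1 a)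
  simp only [stateActionKernel, ← sub_mul, abs_mul, Fintype.sum_prod_type, ← mul_sum, hpol1,
    mul_one]

theorem uncurry_succ_eq_vecMul_stateActionKernel {P : S → A → S → ℝ} {ρ : ℕ → S → A → ℝ}
    (hsucc : ∀ t s' a', ρ (t + 1) s' a' = ∑ s, ∑ a, ρ t s a * P s a s' * pol s' a') (t : ℕ) :
    uncurry (ρ (t + 1)) = uncurry (ρ t) ᵥ* stateActionKernel P pol := by
  ext ⟨s', a'⟩
  simp only [uncurry_apply_pair, hsucc, vecMul, dotProduct, Fintype.sum_prod_type,
    stateActionKernel, mul_assoc]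

theorem uncurry_mem_stdSimplex_of_eq_mul {μ : S → ℝ} {ν : S → A → ℝ} (hμ : μ ∈ stdSimplex ℝ S)
    (hpol : ∀ s, pol s ∈ stdSimplex ℝ A) (hν : ∀ s a, ν s a = μ s * pol s a) :
    uncurry ν ∈ stdSimplex ℝ (S × A) := by
  refine ⟨fun ⟨s, a⟩ => (mul_nonneg (hμ.1 s) ((hpol s).1 a)).trans_eq (hν s a).symm, ?_⟩
  simp only [Fintype.sum_prod_type, uncurry_apply_pair, hν, ← mul_sum, (hpol _).2, mul_one, hμ.2]

end StateAction

theorem namdp_return_error_bound_general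
    {S A : Type*} [Fintype S] [Fintype A]
    (γ : ℝ) (hγ0 : 0 < γ) (hγ1 : γ < 1)
    (μ : S → ℝ) (hμ0 : ∀ s, 0 ≤ μ s) (hμ1 : ∑ s, μ s = 1)
    (pol : S → A → ℝ) (hpol0 : ∀ s a, 0 ≤ pol s a) (hpol1 : ∀ s, ∑ a, pol s a = 1)
    (R Rσ : S → A → ℝ)
    (P Pσ : S → A → S → ℝ)
    (hP0 : ∀ s a s', 0 ≤ P s a s') (hP1 : ∀ s a, ∑ s', P s a s' = 1)
    (hPσ0 : ∀ s a s', 0 ≤ Pσ s a s') (hPσ1 : ∀ s a, ∑ s', Pσ s a s' = 1)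
    (ρ ρσ : ℕ → S → A → ℝ)
    (hρ0 : ∀ s a, ρ 0 s a = μ s * pol s a)
    (hρsucc : ∀ t s' a', ρ (t + 1) s' a' = ∑ s, ∑ a, ρ t s a * P s a s' * pol s' a')
    (hρσ0 : ∀ s a, ρσ 0 s a = μ s * pol s a)
    (hρσsucc : ∀ t s' a', ρσ (t + 1) s' a' = ∑ s, ∑ a, ρσ t s a * Pσ s a s' * pol s' a')
    (dπ dπσ : S → A → ℝ)
    (hdπ : ∀ s a, dπ s a = ∑' t : ℕ, γ ^ t * ρ t s a)
    (hdπσ : ∀ s a, dπσ s a = ∑' t : ℕ, γ ^ t * ρσ t s a)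
    (η ησ : ℝ)
    (hη : η = ∑ s, ∑ a, dπ s a * R s a)
    (hησ : ησ = ∑ s, ∑ a, dπσ s a * Rσ s a)
    (rmax : ℝ) (hrmax : rmax = ⨆ p : S × A, |Rσ p.1 p.2|) :
    |η - ησ| ≤
      (∑ s, ∑ a, dπ s a * |R s a - Rσ s a|) +
        (2 * γ * rmax / (1 - γ) ^ 2) *
          ∑ s, ∑ a, dπ s a * ((1 : ℝ) / 2 * ∑ s', |P s a s' - Pσ s a s'|) := by
  classical
  have hpol : ∀ s, pol s ∈ stdSimplex ℝ A := fun s => ⟨hpol0 s, hpol1 s⟩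
  have hK := stateActionKernel_mem_rowStochastic (fun s a => ⟨hP0 s a, hP1 s a⟩) hpol
  have hKσ := stateActionKernel_mem_rowStochastic (fun s a => ⟨hPσ0 s a, hPσ1 s a⟩) hpol
  have hinit := uncurry_mem_stdSimplex_of_eq_mul ⟨hμ0, hμ1⟩ hpol hρ0
  have hstep := uncurry_succ_eq_vecMul_stateActionKernel hρsucc
  have hrmax0 : 0 ≤ rmax := hrmax ▸ Real.iSup_nonneg fun _ => abs_nonneg _
  have hRσ : ∀ x : S × A, |uncurry Rσ x| ≤ rmax :=
    fun x => hrmax ▸ le_ciSup (f := fun p : S × A => |Rσ p.1 p.2|) (Set.finite_range _).bddAbove x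
  have key := abs_sum_visitation_mul_sub_le hγ0.le hγ1 hK hKσ hinit
    (congrArg uncurry (funext₂ fun s a => (hρσ0 s a).trans (hρ0 s a).symm)) hstep
    (uncurry_succ_eq_vecMul_stateActionKernel hρσsucc) (d := uncurry dπ) (d' := uncurry dπσ)
    (r := uncurry R) (fun x => hdπ x.1 x.2) (fun x => hdπσ x.1 x.2) hrmax0 hRσ
  have hdπ0 : ∀ s a, 0 ≤ dπ s a := fun s a => (hdπ s a).symm ▸
    tsum_pow_mul_nonneg_of_mem_stdSimplex (ρ := fun t => uncurry (ρ t)) hγ0.le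
      (mem_stdSimplex_of_succ_eq_vecMul hK hinit hstep) (s, a)
  simp only [sum_abs_stateActionKernel_sub hpol, Fintype.sum_prod_type, uncurry_apply_pair] at key
  rw [hη, hησ]
  refine key.trans (add_le_add le_rfl ?_)
  have hE : 0 ≤ ∑ s, ∑ a, dπ s a * ∑ s', |P s a s' - Pσ s a s'| :=
    sum_nonneg fun s _ => sum_nonneg fun a _ =>
      mul_nonneg (hdπ0 s a) (sum_nonneg fun _ _ => abs_nonneg _)
  calc _ ≤ rmax * γ / (1 - γ) ^ 2 * ∑ s, ∑ a, dπ s a * ∑ s', |P s a s' - Pσ s a s'| := by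
        gcongr; nlinarith
    _ = _ := by simp only [mul_left_comm _ (1 / 2 : ℝ), ← mul_sum]; ring

/-- **Error Bound in NAMDP (Theorem 3).**
The expected discounted returns of a policy `pol` in the true MDP `(R, P)` and
in the NAMDP `(Rσ, Pσ)` differ by at most a reward-mismatch term plus a
transition-mismatch term in total variation, weighted by the discounted
state–action visitation of `pol` in the true MDP. -/
theorem namdp_return_error_bound
    {S A : Type*} [Fintype S] [Fintype A] [Nonempty S] [Nonempty A]
    (γ : ℝ) (hγ0 : 0 < γ) (hγ1 : γ < 1)
    (μ : S → ℝ) (hμ0 : ∀ s, 0 ≤ μ s) (hμ1 : ∑ s, μ s = 1)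
    (pol : S → A → ℝ) (hpol0 : ∀ s a, 0 ≤ pol s a) (hpol1 : ∀ s, ∑ a, pol s a = 1)
    (R Rσ : S → A → ℝ)
    (P Pσ : S → A → S → ℝ)
    (hP0 : ∀ s a s', 0 ≤ P s a s') (hP1 : ∀ s a, ∑ s', P s a s' = 1)
    (hPσ0 : ∀ s a s', 0 ≤ Pσ s a s') (hPσ1 : ∀ s a, ∑ s', Pσ s a s' = 1)
    (ρ ρσ : ℕ → S → A → ℝ)
    (hρ0 : ∀ s a, ρ 0 s a = μ s * pol s a)
    (hρsucc : ∀ t s' a', ρ (t + 1) s' a' = ∑ s, ∑ a, ρ t s a * P s a s' * pol s' a')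
    (hρσ0 : ∀ s a, ρσ 0 s a = μ s * pol s a)
    (hρσsucc : ∀ t s' a', ρσ (t + 1) s' a' = ∑ s, ∑ a, ρσ t s a * Pσ s a s' * pol s' a')
    (dπ dπσ : S → A → ℝ)
    (hdπ : ∀ s a, dπ s a = ∑' t : ℕ, γ ^ t * ρ t s a)
    (hdπσ : ∀ s a, dπσ s a = ∑' t : ℕ, γ ^ t * ρσ t s a)
    (η ησ : ℝ)
    (hη : η = ∑ s, ∑ a, dπ s a * R s a)
    (hησ : ησ = ∑ s, ∑ a, dπσ s a * Rσ s a)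
    (rmax : ℝ) (hrmax : rmax = ⨆ p : S × A, |Rσ p.1 p.2|) :
    |η - ησ| ≤
      (∑ s, ∑ a, dπ s a * |R s a - Rσ s a|) +
        (2 * γ * rmax / (1 - γ) ^ 2) *
          ∑ s, ∑ a, dπ s a * ((1 : ℝ) / 2 * ∑ s', |P s a s' - Pσ s a s'|) :=
  namdp_return_error_bound_general γ hγ0 hγ1 μ hμ0 hμ1 pol hpol0 hpol1 R Rσ P Pσ hP0 hP1 hPσ0 hPσ1 ρ
    ρσ hρ0 hρsucc hρσ0 hρσsucc dπ dπσ hdπ hdπσ η ησ hη hησ rmax hrmax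
end

section
/- Let F be a finite nonempty subset of ℝ^d with weights p(a) > 0 for a ∈ F, let a' ∈ ℝ^d, and let q_σ : F → ℝ_{>0} (for σ > 0) be a family of positive weights satisfying: (i) for a₁, a₂ ∈ F with ‖a' − a₁‖² > ‖a' − a₂‖², the ratio q_σ(a₁)/q_σ(a₂) tends to 0 as σ → 0⁺, and (ii) for a₁, a₂ ∈ F with ‖a' − a₁‖² = ‖a' − a₂‖², the ratio q_σ(a₁)/q_σ(a₂) tends to 1 as σ → 0⁺. Let C = {a ∈ F : ‖a' − a‖² ≤ ‖a' − y‖² for all y ∈ F}. Then for every function S : F → ℝ, the quotient (Σ_{a∈F} S(a) q_σ(a) p(a)) / (Σ_{a∈F} q_σ(a) p(a)) tends, as σ → 0⁺, to (Σ_{a∈C} S(a) p(a)) / (Σ_{a∈C} p(a)). -/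
open Filter

/-- **Lemma 1.** As the noise scale vanishes, noise-weighted averages over a
finite set `F` concentrate on the set `C` of points of `F` closest to `a'`. -/
theorem noise_weighted_average_tendsto_closest
    {d : ℕ} (F : Finset (EuclideanSpace ℝ (Fin d))) (hF : F.Nonempty)
    (p : EuclideanSpace ℝ (Fin d) → ℝ) (hp : ∀ a ∈ F, 0 < p a)
    (a' : EuclideanSpace ℝ (Fin d))
    (q : ℝ → EuclideanSpace ℝ (Fin d) → ℝ)
    (hqpos : ∀ σ > (0 : ℝ), ∀ a ∈ F, 0 < q σ a)
    (hq0 : ∀ a₁ ∈ F, ∀ a₂ ∈ F, ‖a' - a₁‖ ^ 2 > ‖a' - a₂‖ ^ 2 →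
      Filter.Tendsto (fun σ => q σ a₁ / q σ a₂)
        (nhdsWithin (0 : ℝ) (Set.Ioi 0)) (nhds 0))
    (hq1 : ∀ a₁ ∈ F, ∀ a₂ ∈ F, ‖a' - a₁‖ ^ 2 = ‖a' - a₂‖ ^ 2 →
      Filter.Tendsto (fun σ => q σ a₁ / q σ a₂)
        (nhdsWithin (0 : ℝ) (Set.Ioi 0)) (nhds 1))
    (C : Finset (EuclideanSpace ℝ (Fin d)))
    (hC : C = F.filter fun a => ∀ y ∈ F, ‖a' - a‖ ^ 2 ≤ ‖a' - y‖ ^ 2) :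
    ∀ Sf : EuclideanSpace ℝ (Fin d) → ℝ,
      Filter.Tendsto
        (fun σ => (∑ a ∈ F, Sf a * q σ a * p a) / ∑ a ∈ F, q σ a * p a)
        (nhdsWithin (0 : ℝ) (Set.Ioi 0))
        (nhds ((∑ a ∈ C, Sf a * p a) / ∑ a ∈ C, p a)) := by
  intro Sf
  classical
  obtain ⟨a₀, ha₀F, ha₀min⟩ := F.exists_min_image (fun a => ‖a' - a‖ ^ 2) hF
  have ha₀C : a₀ ∈ C := by
    rw [hC, Finset.mem_filter]; exact ⟨ha₀F, ha₀min⟩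
  have hCF : C ⊆ F := by rw [hC]; exact Finset.filter_subset _ _
  set l : EuclideanSpace ℝ (Fin d) → ℝ := fun a => if a ∈ C then 1 else 0 with hl
  have hterm : ∀ a ∈ F, Tendsto (fun σ => q σ a / q σ a₀)
      (nhdsWithin 0 (Set.Ioi 0)) (nhds (l a)) := by
    intro a haF
    by_cases hmem : a ∈ C
    · simp only [hl, hmem, if_true]
      have h2 := hmem
      rw [hC, Finset.mem_filter] at h2
      exact hq1 a haF a₀ ha₀F (le_antisymm (h2.2 a₀ ha₀F) (ha₀min a haF))
    · simp only [hl, hmem, if_false]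
      have hne : ‖a' - a‖ ^ 2 > ‖a' - a₀‖ ^ 2 := by
        rcases lt_or_eq_of_le (ha₀min a haF) with h | h
        · exact h
        · exfalso; apply hmem; rw [hC, Finset.mem_filter]
          refine ⟨haF, fun y hy => ?_⟩
          rw [← h]; exact ha₀min y hy
      exact hq0 a haF a₀ ha₀F hne
  have hfilt : F.filter (· ∈ C) = C := by
    rw [Finset.filter_mem_eq_inter, Finset.inter_eq_right.mpr hCF]
  have hsum_num : (∑ a ∈ F, Sf a * l a * p a) = ∑ a ∈ C, Sf a * p a := by
    have h : ∀ a ∈ F, Sf a * l a * p a = if a ∈ C then Sf a * p a else 0 := by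
      intro a _; by_cases h : a ∈ C <;> simp [hl, h]
    rw [Finset.sum_congr rfl h, ← Finset.sum_filter, hfilt]
  have hsum_den : (∑ a ∈ F, l a * p a) = ∑ a ∈ C, p a := by
    have h : ∀ a ∈ F, l a * p a = if a ∈ C then p a else 0 := by
      intro a _; by_cases h : a ∈ C <;> simp [hl, h]
    rw [Finset.sum_congr rfl h, ← Finset.sum_filter, hfilt]
  have hnum : Tendsto (fun σ => ∑ a ∈ F, Sf a * (q σ a / q σ a₀) * p a)
      (nhdsWithin 0 (Set.Ioi 0)) (nhds (∑ a ∈ F, Sf a * l a * p a)) :=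
    tendsto_finset_sum _ fun a ha =>
      (tendsto_const_nhds.mul (hterm a ha)).mul tendsto_const_nhds
  have hden : Tendsto (fun σ => ∑ a ∈ F, (q σ a / q σ a₀) * p a)
      (nhdsWithin 0 (Set.Ioi 0)) (nhds (∑ a ∈ F, l a * p a)) :=
    tendsto_finset_sum _ fun a ha => (hterm a ha).mul tendsto_const_nhds
  have hdpos : 0 < ∑ a ∈ C, p a :=
    Finset.sum_pos (fun a ha => hp a (hCF ha)) ⟨a₀, ha₀C⟩
  have hdne : (∑ a ∈ F, l a * p a) ≠ 0 := by rw [hsum_den]; exact hdpos.ne'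
  have hmain := hnum.div hden hdne
  rw [hsum_num, hsum_den] at hmain
  refine hmain.congr' ?_
  filter_upwards [self_mem_nhdsWithin] with σ hσ
  have hc : 0 < q σ a₀ := hqpos σ hσ a₀ ha₀F
  have hy : 0 < ∑ a ∈ F, q σ a * p a :=
    Finset.sum_pos (fun a ha => mul_pos (hqpos σ hσ a ha) (hp a ha)) hF
  have e1 : (∑ a ∈ F, Sf a * (q σ a / q σ a₀) * p a)
      = (∑ a ∈ F, Sf a * q σ a * p a) / q σ a₀ := by
    rw [Finset.sum_div]
    exact Finset.sum_congr rfl fun a _ => by ring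
  have e2 : (∑ a ∈ F, (q σ a / q σ a₀) * p a)
      = (∑ a ∈ F, q σ a * p a) / q σ a₀ := by
    rw [Finset.sum_div]
    exact Finset.sum_congr rfl fun a _ => by ring
  simp only [Pi.div_apply]
  rw [e1, e2]
  field_simp
end

section
/- Let F be a finite nonempty subset of ℝ^d with weights p(a) > 0 for a ∈ F, let a' ∈ ℝ^d, and let q_σ : F → ℝ_{>0} (for σ > 0) satisfy: (i) for a₁, a₂ ∈ F with ‖a' − a₁‖² > ‖a' − a₂‖², q_σ(a₁)/q_σ(a₂) → 0 as σ → 0⁺, and (ii) for a₁, a₂ ∈ F with ‖a' − a₁‖² = ‖a' − a₂‖², q_σ(a₁)/q_σ(a₂) → 1 as σ → 0⁺. Let C = {a ∈ F : ‖a' − a‖² ≤ ‖a' − y‖² for all y ∈ F}. Then for every function S : F → ℝ, (Σ_{a∈C} S(a) q_σ(a) p(a)) / (Σ_{a∈F} q_σ(a) p(a)) tends, as σ → 0⁺, to (Σ_{a∈C} S(a) p(a)) / (Σ_{a∈C} p(a)). -/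
/-- **Second sub-claim in the proof of Lemma 1.** The contribution of the
points of `F` closest to `a'` converges to their `p`-weighted restricted
average. -/
theorem noise_weight_closest_points_tendsto_restricted_average
    {d : ℕ} (F : Finset (EuclideanSpace ℝ (Fin d))) (hF : F.Nonempty)
    (p : EuclideanSpace ℝ (Fin d) → ℝ) (hp : ∀ a ∈ F, 0 < p a)
    (a' : EuclideanSpace ℝ (Fin d))
    (q : ℝ → EuclideanSpace ℝ (Fin d) → ℝ)
    (hqpos : ∀ σ > (0 : ℝ), ∀ a ∈ F, 0 < q σ a)
    (hq0 : ∀ a₁ ∈ F, ∀ a₂ ∈ F, ‖a' - a₁‖ ^ 2 > ‖a' - a₂‖ ^ 2 →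
      Filter.Tendsto (fun σ => q σ a₁ / q σ a₂)
        (nhdsWithin (0 : ℝ) (Set.Ioi 0)) (nhds 0))
    (hq1 : ∀ a₁ ∈ F, ∀ a₂ ∈ F, ‖a' - a₁‖ ^ 2 = ‖a' - a₂‖ ^ 2 →
      Filter.Tendsto (fun σ => q σ a₁ / q σ a₂)
        (nhdsWithin (0 : ℝ) (Set.Ioi 0)) (nhds 1))
    (C : Finset (EuclideanSpace ℝ (Fin d)))
    (hC : C = F.filter fun a => ∀ y ∈ F, ‖a' - a‖ ^ 2 ≤ ‖a' - y‖ ^ 2) :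
    ∀ Sf : EuclideanSpace ℝ (Fin d) → ℝ,
      Filter.Tendsto
        (fun σ => (∑ a ∈ C, Sf a * q σ a * p a) / ∑ a ∈ F, q σ a * p a)
        (nhdsWithin (0 : ℝ) (Set.Ioi 0))
        (nhds ((∑ a ∈ C, Sf a * p a) / ∑ a ∈ C, p a)) := by
  intro Sf
  classical
  obtain ⟨a₀, ha₀F, ha₀min⟩ := F.exists_min_image (fun a => ‖a' - a‖ ^ 2) hF
  have hCsub : C ⊆ F := by rw [hC]; exact Finset.filter_subset _ _
  have ha₀C : a₀ ∈ C := by rw [hC]; exact Finset.mem_filter.2 ⟨ha₀F, ha₀min⟩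
  have hmemC : ∀ a ∈ C, ‖a' - a‖ ^ 2 = ‖a' - a₀‖ ^ 2 := by
    intro a ha
    rw [hC] at ha
    obtain ⟨haF, hmin⟩ := Finset.mem_filter.1 ha
    exact le_antisymm (hmin a₀ ha₀F) (ha₀min a haF)
  have hnotC : ∀ a ∈ F, a ∉ C → ‖a' - a‖ ^ 2 > ‖a' - a₀‖ ^ 2 := by
    intro a haF haC
    rw [hC, Finset.mem_filter] at haC
    push_neg at haC
    obtain ⟨y, hyF, hy⟩ := haC haF
    exact lt_of_le_of_lt (ha₀min y hyF) hy
  have hratio : ∀ a ∈ F, Filter.Tendsto (fun σ => q σ a / q σ a₀)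
      (nhdsWithin (0 : ℝ) (Set.Ioi 0)) (nhds (if a ∈ C then 1 else 0)) := by
    intro a haF
    by_cases h : a ∈ C
    · simpa [h] using hq1 a haF a₀ ha₀F (hmemC a h)
    · simpa [h] using hq0 a haF a₀ ha₀F (hnotC a haF h)
  have hN : Filter.Tendsto (fun σ => ∑ a ∈ C, Sf a * (q σ a / q σ a₀) * p a)
      (nhdsWithin (0 : ℝ) (Set.Ioi 0)) (nhds (∑ a ∈ C, Sf a * p a)) := by
    have h := tendsto_finset_sum C (fun a ha =>
      (((hratio a (hCsub ha)).const_mul (Sf a)).mul_const (p a)))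
    have : (∑ a ∈ C, Sf a * (if a ∈ C then (1:ℝ) else 0) * p a)
        = ∑ a ∈ C, Sf a * p a := by
      refine Finset.sum_congr rfl fun a ha => by simp [ha]
    rwa [this] at h
  have hD : Filter.Tendsto (fun σ => ∑ a ∈ F, (q σ a / q σ a₀) * p a)
      (nhdsWithin (0 : ℝ) (Set.Ioi 0)) (nhds (∑ a ∈ C, p a)) := by
    have h := tendsto_finset_sum F (fun a ha => ((hratio a ha).mul_const (p a)))
    have : (∑ a ∈ F, (if a ∈ C then (1:ℝ) else 0) * p a) = ∑ a ∈ C, p a := by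
      simp only [ite_mul, one_mul, zero_mul]
      rw [Finset.sum_ite_mem, Finset.inter_eq_right.2 hCsub]
    rwa [this] at h
  have hCpos : (0 : ℝ) < ∑ a ∈ C, p a :=
    Finset.sum_pos (fun a ha => hp a (hCsub ha)) ⟨a₀, ha₀C⟩
  have hdiv := hN.div hD (ne_of_gt hCpos)
  refine hdiv.congr' ?_
  filter_upwards [self_mem_nhdsWithin] with σ (hσ : σ ∈ Set.Ioi 0)
  have hq₀ : q σ a₀ ≠ 0 := ne_of_gt (hqpos σ hσ a₀ ha₀F)
  have e1 : (∑ a ∈ C, Sf a * (q σ a / q σ a₀) * p a)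
      = (∑ a ∈ C, Sf a * q σ a * p a) / q σ a₀ := by
    rw [Finset.sum_div]
    exact Finset.sum_congr rfl fun a _ => by ring
  have e2 : (∑ a ∈ F, (q σ a / q σ a₀) * p a)
      = (∑ a ∈ F, q σ a * p a) / q σ a₀ := by
    rw [Finset.sum_div]
    exact Finset.sum_congr rfl fun a _ => by ring
  simp only [Pi.div_apply]
  have hB : (∑ a ∈ F, q σ a * p a) ≠ 0 :=
    ne_of_gt (Finset.sum_pos (fun a ha => mul_pos (hqpos σ hσ a ha) (hp a ha)) hF)
  rw [e1, e2]
  field_simp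
end

section
/- Let S be a finite state set and A a finite set of actions in ℝ^d. Fix γ ∈ [0,1), behavior weights p_D(a∣s) ≥ 0 with Σ_{a∈A} p_D(a∣s) = 1 and nonempty support supp(s) = {a ∈ A : p_D(a∣s) > 0}, transition weights p_D(s'∣s,a) ≥ 0 with Σ_{s'} p_D(s'∣s,a) = 1, a reward R : S × A → ℝ, and a policy π(ā∣s') with Σ_{ā} π(ā∣s') = 1. For each s and a' ∈ A let C(a',s) = {a ∈ supp(s) : ‖a' − a‖² ≤ ‖a' − y‖² for all y ∈ supp(s)}, and let p_C(a∣a',s) = p_D(a∣s)/Σ_{b∈C(a',s)} p_D(b∣s) for a ∈ C(a',s) and 0 otherwise. Define R̄(s,a') = Σ_{a∈C(a',s)} p_C(a∣a',s)(R(s,a) − ‖a−a'‖²) and P̄(s'∣s,a') = Σ_{a∈C(a',s)} p_C(a∣a',s) p_D(s'∣s,a). Suppose Q : S × A → ℝ satisfies Q(s,a') = R̄(s,a') + γ Σ_{s'} P̄(s'∣s,a') Σ_{ā} π(ā∣s') Q(s',ā) for all (s,a'). Then for all s ∈ S and a' ∈ A, Σ_{a∈C(a',s)} p_C(a∣a',s)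 Q(s,a) = Q(s,a') + min_{a∈supp(s)} ‖a' − a‖². -/
/-- **Lemma 2.** In the zero-noise-limit NAMDP, the restricted average of the
Q-value of a policy over the dataset actions closest to `a'` exceeds the
Q-value at `a'` by exactly the squared distance from `a'` to the dataset
support. -/
theorem namdp_zero_noise_q_value_identity
    {S A : Type*} [Fintype S] [Fintype A] [Nonempty S] [Nonempty A]
    {d : ℕ} (ι : A → EuclideanSpace ℝ (Fin d))
    (γ : ℝ) (hγ0 : 0 ≤ γ) (hγ1 : γ < 1)
    (pDa : S → A → ℝ) (hpDa0 : ∀ s a, 0 ≤ pDa s a) (hpDa1 : ∀ s, ∑ a, pDa s a = 1)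
    (supp : S → Finset A)
    (hsupp : ∀ s, supp s = Finset.univ.filter fun a => 0 < pDa s a)
    (hsupp_ne : ∀ s, (supp s).Nonempty)
    (pDs : S → A → S → ℝ) (hpDs0 : ∀ s a s', 0 ≤ pDs s a s')
    (hpDs1 : ∀ s a, ∑ s', pDs s a s' = 1)
    (R : S → A → ℝ)
    (pol : S → A → ℝ) (hpol1 : ∀ s', ∑ abar, pol s' abar = 1)
    (C : S → A → Finset A)
    (hC : ∀ s a', C s a' =
      (supp s).filter fun a => ∀ y ∈ supp s, ‖ι a' - ι a‖ ^ 2 ≤ ‖ι a' - ι y‖ ^ 2)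
    (pC : S → A → A → ℝ)
    (hpC_mem : ∀ s a', ∀ a ∈ C s a',
      pC s a' a = pDa s a / ∑ b ∈ C s a', pDa s b)
    (hpC_not_mem : ∀ s a', ∀ a ∉ C s a', pC s a' a = 0)
    (Rbar : S → A → ℝ)
    (hRbar : ∀ s a', Rbar s a' =
      ∑ a ∈ C s a', pC s a' a * (R s a - ‖ι a - ι a'‖ ^ 2))
    (Pbar : S → A → S → ℝ)
    (hPbar : ∀ s a' s', Pbar s a' s' = ∑ a ∈ C s a', pC s a' a * pDs s a s')
    (Q : S → A → ℝ)
    (hQ : ∀ s a', Q s a' =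
      Rbar s a' + γ * ∑ s', Pbar s a' s' * ∑ abar, pol s' abar * Q s' abar) :
    ∀ s a', (∑ a ∈ C s a', pC s a' a * Q s a) =
      Q s a' + (supp s).inf' (hsupp_ne s) (fun a => ‖ι a' - ι a‖ ^ 2) := by
  intro s a'
  set D := C s a' with hD
  have hDsub : D ⊆ supp s := by
    rw [hD, hC]; exact Finset.filter_subset _ _
  have hDmem : ∀ a, a ∈ D ↔ a ∈ supp s ∧
      ∀ y ∈ supp s, ‖ι a' - ι a‖ ^ 2 ≤ ‖ι a' - ι y‖ ^ 2 := by
    intro a; rw [hD, hC]; simp [Finset.mem_filter]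
  obtain ⟨a0, ha0s, ha0min⟩ :=
    Finset.exists_min_image (supp s) (fun a => ‖ι a' - ι a‖ ^ 2) (hsupp_ne s)
  have ha0D : a0 ∈ D := (hDmem a0).2 ⟨ha0s, ha0min⟩
  have hpos_of_supp : ∀ a ∈ supp s, 0 < pDa s a := by
    intro a ha; rw [hsupp] at ha; exact (Finset.mem_filter.1 ha).2
  set m := (supp s).inf' (hsupp_ne s) (fun a => ‖ι a' - ι a‖ ^ 2) with hm
  have hmval : ∀ a ∈ D, ‖ι a' - ι a‖ ^ 2 = m := by
    intro a haD
    obtain ⟨has, hmin⟩ := (hDmem a).1 haD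
    exact le_antisymm (Finset.le_inf' _ _ hmin) (Finset.inf'_le _ has)
  set W := ∑ b ∈ D, pDa s b with hWdef
  have hW : 0 < W :=
    Finset.sum_pos' (fun b _ => hpDa0 s b) ⟨a0, ha0D, hpos_of_supp a0 (hDsub ha0D)⟩
  have hpCD : ∀ a ∈ D, pC s a' a = pDa s a / W := fun a ha => hpC_mem s a' a ha
  have hsum_pC : ∑ a ∈ D, pC s a' a = 1 := by
    rw [Finset.sum_congr rfl hpCD, ← Finset.sum_div, ← hWdef]
    exact div_self hW.ne'
  have hCa : ∀ a ∈ D, ∀ b, b ∈ C s a ↔ b ∈ supp s ∧ ι b = ι a := by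
    intro a haD b
    have has : a ∈ supp s := hDsub haD
    rw [hC]; simp only [Finset.mem_filter]
    constructor
    · rintro ⟨hb, h⟩
      have h0 : ‖ι a - ι b‖ ^ 2 ≤ 0 := by simpa using h a has
      have h1 : ‖ι a - ι b‖ = 0 := by nlinarith [norm_nonneg (ι a - ι b)]
      exact ⟨hb, (sub_eq_zero.1 (norm_eq_zero.1 h1)).symm⟩
    · rintro ⟨hb, he⟩
      refine ⟨hb, fun y _ => ?_⟩
      simp [he]
  have hself : ∀ a ∈ D, a ∈ C s a := fun a ha => (hCa a ha a).2 ⟨hDsub ha, rfl⟩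
  have hCsubD : ∀ a ∈ D, C s a ⊆ D := by
    intro a haD b hb
    obtain ⟨hbs, hbe⟩ := (hCa a haD b).1 hb
    refine (hDmem b).2 ⟨hbs, fun y hy => ?_⟩
    rw [hbe]
    exact ((hDmem a).1 haD).2 y hy
  have hCeq : ∀ a ∈ D, ∀ b ∈ D, ι a = ι b → C s a = C s b := by
    intro a haD b hbD he
    ext c
    rw [hCa a haD c, hCa b hbD c, he]
  have key : ∀ g : A → ℝ,
      ∑ a ∈ D, pC s a' a * ∑ b ∈ C s a, pC s a b * g b
        = ∑ a ∈ D, pC s a' a * g a := by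
    intro g
    have h1 : ∀ a ∈ D, ∑ b ∈ C s a, pC s a b * g b = ∑ b ∈ D, pC s a b * g b := by
      intro a ha
      exact Finset.sum_subset (hCsubD a ha)
        (fun b _ hbn => by rw [hpC_not_mem s a b hbn]; ring)
    calc ∑ a ∈ D, pC s a' a * ∑ b ∈ C s a, pC s a b * g b
        = ∑ a ∈ D, ∑ b ∈ D, pC s a' a * (pC s a b * g b) := by
          refine Finset.sum_congr rfl fun a ha => ?_
          rw [h1 a ha, Finset.mul_sum]
      _ = ∑ b ∈ D, (∑ a ∈ D, pC s a' a * pC s a b) * g b := by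
          rw [Finset.sum_comm]
          refine Finset.sum_congr rfl fun b _ => ?_
          rw [Finset.sum_mul]
          exact Finset.sum_congr rfl fun a _ => by ring
      _ = ∑ a ∈ D, pC s a' a * g a := by
          refine Finset.sum_congr rfl fun b hb => ?_
          congr 1
          have hsub : C s b ⊆ D := hCsubD b hb
          have hWB : 0 < ∑ c ∈ C s b, pDa s c :=
            Finset.sum_pos' (fun c _ => hpDa0 s c)
              ⟨b, hself b hb, hpos_of_supp b (hDsub hb)⟩
          have hzero : ∀ a ∈ D, a ∉ C s b → pC s a' a * pC s a b = 0 := by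
            intro a haD han
            have hbn : b ∉ C s a := by
              intro hbC
              obtain ⟨_, hbe⟩ := (hCa a haD b).1 hbC
              exact han ((hCa b hb a).2 ⟨hDsub haD, hbe.symm⟩)
            rw [hpC_not_mem s a b hbn]; ring
          rw [← Finset.sum_subset hsub hzero]
          have hterm : ∀ a ∈ C s b,
              pC s a' a * pC s a b
                = pDa s a / W * (pDa s b / ∑ c ∈ C s b, pDa s c) := by
            intro a haC
            obtain ⟨_, hae⟩ := (hCa b hb a).1 haC
            have haD : a ∈ D := hsub haC
            have hbC : b ∈ C s a := (hCa a haD b).2 ⟨hDsub hb, hae.symm⟩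
            rw [hpCD a haD, hpC_mem s a b hbC, hCeq a haD b hb hae]
          rw [Finset.sum_congr rfl hterm, ← Finset.sum_mul, ← Finset.sum_div,
            hpC_mem s a' b hb, ← hWdef]
          field_simp
  set g : A → ℝ := fun a =>
    R s a + γ * ∑ s', pDs s a s' * ∑ abar, pol s' abar * Q s' abar with hg
  have h2 : ∀ a, ∑ s', Pbar s a s' * ∑ abar, pol s' abar * Q s' abar
      = ∑ b ∈ C s a, pC s a b * ∑ s', pDs s b s' * ∑ abar, pol s' abar * Q s' abar := by
    intro a
    simp only [hPbar, Finset.sum_mul]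
    rw [Finset.sum_comm]
    refine Finset.sum_congr rfl fun b _ => ?_
    rw [Finset.mul_sum]
    exact Finset.sum_congr rfl fun s' _ => by ring
  have hQmem : ∀ a ∈ D, Q s a = ∑ b ∈ C s a, pC s a b * g b := by
    intro a haD
    rw [hQ s a, hRbar s a, h2 a, Finset.mul_sum, ← Finset.sum_add_distrib]
    refine Finset.sum_congr rfl fun b hbC => ?_
    have hbe : ι b = ι a := ((hCa a haD b).1 hbC).2
    have hz : ‖ι b - ι a‖ ^ 2 = 0 := by simp [hbe]
    rw [hz]
    simp only [hg]
    ring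
  have hQa' : Q s a' = (∑ a ∈ D, pC s a' a * g a) - m := by
    rw [hQ s a', hRbar s a', h2 a', Finset.mul_sum, ← hD, ← Finset.sum_add_distrib]
    have hterm : ∀ a ∈ D, pC s a' a * (R s a - ‖ι a - ι a'‖ ^ 2)
        + γ * (pC s a' a * ∑ s', pDs s a s' * ∑ abar, pol s' abar * Q s' abar)
        = pC s a' a * g a - pC s a' a * m := by
      intro a ha
      rw [norm_sub_rev (ι a) (ι a'), hmval a ha]
      simp only [hg]
      ring
    rw [Finset.sum_congr rfl hterm, Finset.sum_sub_distrib, ← Finset.sum_mul,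
      hsum_pC, one_mul]
  calc ∑ a ∈ D, pC s a' a * Q s a
      = ∑ a ∈ D, pC s a' a * ∑ b ∈ C s a, pC s a b * g b :=
        Finset.sum_congr rfl fun a ha => by rw [hQmem a ha]
    _ = ∑ a ∈ D, pC s a' a * g a := key g
    _ = Q s a' + m := by rw [hQa']; ring
end

section
/- Let S and A be finite nonempty sets and γ ∈ [0,1). Let R̄ : S × A → ℝ and, for each (s,a), P̄(·∣s,a) a probability distribution on S; for each σ > 0 let R_σ : S × A → ℝ and P_σ(·∣s,a) probability distributions on S, with R_σ(s,a) → R̄(s,a) and P_σ(s'∣s,a) → P̄(s'∣s,a) as σ → 0⁺ for every (s,a,s'). Let Q* : S × A → ℝ be the fixed point of the Bellman optimality operator T̄ of (R̄, P̄, γ), and for each σ > 0 let Q*_σ be the fixed point of the Bellman optimality operator T_σ of (R_σ, P_σ, γ). Then for every ε > 0 there exists σ' > 0 such that for all 0 < σ < σ', max_{(s,a)} |Q*(s,a) − Q*_σ(s,a)| < ε. -/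
/-!
Each perturbed Bellman operator `T_σ` is a `γ`-contraction for the sup metric, so its fixed point
satisfies `‖Q* - Q*_σ‖ ≤ ‖Q* - T_σ Q*‖ / (1 - γ)`. Since `Q* = T̄ Q*` and, for the fixed function
`Q*`, `T_σ Q*` depends continuously on the finitely many numbers `R_σ(s,a)` and `P_σ(s'|s,a)`,
the right-hand side tends to `0` as `σ → 0⁺`.
-/

open Filter Topology Finset

theorem Finset.dist_sup'_univ_le_dist {ι : Type*} [Fintype ι] [Nonempty ι] (f g : ι → ℝ) :
    dist (univ.sup' univ_nonempty f) (univ.sup' univ_nonempty g) ≤ dist f g := by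
  have hle : ∀ f g : ι → ℝ, univ.sup' univ_nonempty f ≤ univ.sup' univ_nonempty g + dist f g :=
    fun f g => sup'_le _ _ fun i _ =>
      calc f i ≤ g i + dist (f i) (g i) := by linarith [Real.sub_le_dist (f i) (g i)]
        _ ≤ _ := add_le_add (le_sup' g (mem_univ i)) (dist_le_pi_dist f g i)
  rw [Real.dist_eq, abs_sub_le_iff]
  constructor
  · linarith [hle f g]
  · linarith [hle g f, dist_comm f g]

theorem Finset.sup'_univ_abs_sub_eq_dist {ι : Type*} [Fintype ι] [Nonempty ι] (f g : ι → ℝ) :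
    univ.sup' univ_nonempty (fun i => |f i - g i|) = dist f g := by
  have hle : ∀ i, |f i - g i| ≤ univ.sup' univ_nonempty (fun i => |f i - g i|) :=
    fun i => le_sup' (fun i => |f i - g i|) (mem_univ i)
  exact le_antisymm
    (sup'_le _ _ fun i _ => (Real.dist_eq _ _).symm.trans_le (dist_le_pi_dist f g i))
    ((dist_pi_le_iff ((abs_nonneg _).trans (hle (Classical.arbitrary ι)))).2
      fun i => (Real.dist_eq _ _).trans_le (hle i))

theorem ContractingWith.tendsto_of_isFixedPt {α ι : Type*} [MetricSpace α] {K : NNReal}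
    {l : Filter ι} {f : ι → α → α} {y : ι → α} {x : α}
    (hf : ∀ᶠ i in l, ContractingWith K (f i)) (hy : ∀ᶠ i in l, Function.IsFixedPt (f i) (y i))
    (hx : Tendsto (fun i => f i x) l (𝓝 x)) : Tendsto y l (𝓝 x) := by
  rw [tendsto_iff_dist_tendsto_zero] at hx ⊢
  refine squeeze_zero' (Eventually.of_forall fun i => dist_nonneg) ?_
    (by simpa using hx.div_const (1 - (K : ℝ)))
  filter_upwards [hf, hy] with i hfi hyi
  rw [dist_comm, dist_comm (f i x)]
  exact hfi.dist_le_of_fixedPoint x hyi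

section Bellman

variable {S A : Type*} [Fintype S] [Fintype A] [Nonempty A]

-- Q-functions live on `S × A → ℝ`, whose `dist` is the sup metric.
noncomputable def bellmanOptimality (γ : ℝ) (R : S → A → ℝ) (P : S → A → S → ℝ)
    (Q : S × A → ℝ) : S × A → ℝ :=
  fun p => R p.1 p.2 + γ * ∑ s', P p.1 p.2 s' * univ.sup' univ_nonempty fun a => Q (s', a)

theorem lipschitzWith_bellmanOptimality {γ : ℝ} (hγ : 0 ≤ γ) (R : S → A → ℝ)
    {P : S → A → S → ℝ} (hP0 : ∀ s a s', 0 ≤ P s a s') (hP1 : ∀ s a, ∑ s', P s a s' = 1) :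
    LipschitzWith (Real.toNNReal γ) (bellmanOptimality γ R P) := by
  refine LipschitzWith.of_dist_le_mul fun Q Q' => ?_
  rw [Real.coe_toNNReal γ hγ]
  refine (dist_pi_le_iff (by positivity)).2 fun ⟨s, a⟩ => ?_
  have hV : ∀ s', dist (univ.sup' univ_nonempty fun a => Q (s', a))
      (univ.sup' univ_nonempty fun a => Q' (s', a)) ≤ dist Q Q' := fun s' =>
    (dist_sup'_univ_le_dist _ _).trans <|
      (dist_pi_le_iff dist_nonneg).2 fun a => dist_le_pi_dist Q Q' (s', a)
  calc dist (bellmanOptimality γ R P Q (s, a)) (bellmanOptimality γ R P Q' (s, a))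
      = γ * |∑ s', P s a s' * ((univ.sup' univ_nonempty fun a => Q (s', a)) -
          univ.sup' univ_nonempty fun a => Q' (s', a))| := by
        simp only [bellmanOptimality, Real.dist_eq, mul_sub, sum_sub_distrib]
        rw [add_sub_add_left_eq_sub, ← mul_sub, abs_mul, abs_of_nonneg hγ]
    _ ≤ γ * ∑ s', P s a s' * dist Q Q' := by
        gcongr
        refine (abs_sum_le_sum_abs _ _).trans (sum_le_sum fun s' _ => ?_)
        rw [abs_mul, abs_of_nonneg (hP0 s a s'), ← Real.dist_eq]
        exact mul_le_mul_of_nonneg_left (hV s') (hP0 s a s')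
    _ = γ * dist Q Q' := by rw [← sum_mul, hP1, one_mul]

theorem tendsto_bellmanOptimality {ι : Type*} {l : Filter ι} (γ : ℝ)
    {R : ι → S → A → ℝ} {P : ι → S → A → S → ℝ} {R₀ : S → A → ℝ} {P₀ : S → A → S → ℝ}
    (hR : ∀ s a, Tendsto (fun i => R i s a) l (𝓝 (R₀ s a)))
    (hP : ∀ s a s', Tendsto (fun i => P i s a s') l (𝓝 (P₀ s a s'))) (Q : S × A → ℝ) :
    Tendsto (fun i => bellmanOptimality γ (R i) (P i) Q) l
      (𝓝 (bellmanOptimality γ R₀ P₀ Q)) :=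
  tendsto_pi_nhds.2 fun ⟨s, a⟩ => (hR s a).add <|
    (tendsto_finsetSum _ fun s' _ => (hP s a s').mul_const _).const_mul γ

end Bellman

theorem optimal_q_uniform_convergence_general
    {S A : Type*} [Fintype S] [Fintype A] [Nonempty S] [Nonempty A]
    (γ : ℝ) (hγ0 : 0 ≤ γ) (hγ1 : γ < 1)
    (Rbar : S → A → ℝ) (Pbar : S → A → S → ℝ)
    (Rσ : ℝ → S → A → ℝ) (Pσ : ℝ → S → A → S → ℝ)
    (hPσ0 : ∀ σ > (0 : ℝ), ∀ s a s', 0 ≤ Pσ σ s a s')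
    (hPσ1 : ∀ σ > (0 : ℝ), ∀ s a, ∑ s', Pσ σ s a s' = 1)
    (hR : ∀ s a, Filter.Tendsto (fun σ => Rσ σ s a)
      (nhdsWithin (0 : ℝ) (Set.Ioi 0)) (nhds (Rbar s a)))
    (hP : ∀ s a s', Filter.Tendsto (fun σ => Pσ σ s a s')
      (nhdsWithin (0 : ℝ) (Set.Ioi 0)) (nhds (Pbar s a s')))
    (Qstar : S → A → ℝ)
    (hQstar : ∀ s a, Qstar s a = Rbar s a + γ * ∑ s', Pbar s a s' *
      Finset.univ.sup' Finset.univ_nonempty (Qstar s'))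
    (Qσstar : ℝ → S → A → ℝ)
    (hQσstar : ∀ σ > (0 : ℝ), ∀ s a, Qσstar σ s a =
      Rσ σ s a + γ * ∑ s', Pσ σ s a s' *
        Finset.univ.sup' Finset.univ_nonempty (Qσstar σ s')) :
    ∀ ε > (0 : ℝ), ∃ σ' > (0 : ℝ), ∀ σ : ℝ, 0 < σ → σ < σ' →
      (Finset.univ.sup' Finset.univ_nonempty fun p : S × A =>
        |Qstar p.1 p.2 - Qσstar σ p.1 p.2|) < ε := by
  have hcontr : ∀ σ > (0 : ℝ),
      ContractingWith (Real.toNNReal γ) (bellmanOptimality γ (Rσ σ) (Pσ σ)) := fun σ hσ =>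
    ⟨Real.toNNReal_lt_one.2 hγ1, lipschitzWith_bellmanOptimality hγ0 _ (hPσ0 σ hσ) (hPσ1 σ hσ)⟩
  have hfix : ∀ σ > (0 : ℝ), Function.IsFixedPt (bellmanOptimality γ (Rσ σ) (Pσ σ))
      (Function.uncurry (Qσstar σ)) := fun σ hσ =>
    funext fun p : S × A => (hQσstar σ hσ p.1 p.2).symm
  have hfix_lim : bellmanOptimality γ Rbar Pbar (Function.uncurry Qstar) =
      Function.uncurry Qstar := funext fun p : S × A => (hQstar p.1 p.2).symm
  have hlim : Tendsto (fun σ => Function.uncurry (Qσstar σ)) (𝓝[>] 0)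
      (𝓝 (Function.uncurry Qstar)) :=
    ContractingWith.tendsto_of_isFixedPt (eventually_mem_nhdsWithin.mono hcontr)
      (eventually_mem_nhdsWithin.mono hfix)
      (by simpa only [hfix_lim] using tendsto_bellmanOptimality γ hR hP (Function.uncurry Qstar))
  intro ε hε
  obtain ⟨δ, hδ, hclose⟩ := Metric.tendsto_nhdsWithin_nhds.1 hlim ε hε
  refine ⟨δ, hδ, fun σ hσ hσδ => ?_⟩
  refine (sup'_univ_abs_sub_eq_dist (Function.uncurry Qstar) _).trans_lt ?_
  rw [dist_comm]
  exact hclose hσ (by rwa [Real.dist_0_eq_abs, abs_of_pos hσ])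

/-- **Corollary 2.** As the noise scale vanishes, the optimal Q-function of the
NAMDP (the fixed point of its Bellman optimality operator) converges uniformly
to the optimal Q-function of the zero-noise-limit NAMDP. -/
theorem optimal_q_uniform_convergence
    {S A : Type*} [Fintype S] [Fintype A] [Nonempty S] [Nonempty A]
    (γ : ℝ) (hγ0 : 0 ≤ γ) (hγ1 : γ < 1)
    (Rbar : S → A → ℝ) (Pbar : S → A → S → ℝ)
    (hPbar0 : ∀ s a s', 0 ≤ Pbar s a s') (hPbar1 : ∀ s a, ∑ s', Pbar s a s' = 1)
    (Rσ : ℝ → S → A → ℝ) (Pσ : ℝ → S → A → S → ℝ)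
    (hPσ0 : ∀ σ > (0 : ℝ), ∀ s a s', 0 ≤ Pσ σ s a s')
    (hPσ1 : ∀ σ > (0 : ℝ), ∀ s a, ∑ s', Pσ σ s a s' = 1)
    (hR : ∀ s a, Filter.Tendsto (fun σ => Rσ σ s a)
      (nhdsWithin (0 : ℝ) (Set.Ioi 0)) (nhds (Rbar s a)))
    (hP : ∀ s a s', Filter.Tendsto (fun σ => Pσ σ s a s')
      (nhdsWithin (0 : ℝ) (Set.Ioi 0)) (nhds (Pbar s a s')))
    (Qstar : S → A → ℝ)
    (hQstar : ∀ s a, Qstar s a = Rbar s a + γ * ∑ s', Pbar s a s' *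
      Finset.univ.sup' Finset.univ_nonempty (Qstar s'))
    (Qσstar : ℝ → S → A → ℝ)
    (hQσstar : ∀ σ > (0 : ℝ), ∀ s a, Qσstar σ s a =
      Rσ σ s a + γ * ∑ s', Pσ σ s a s' *
        Finset.univ.sup' Finset.univ_nonempty (Qσstar σ s')) :
    ∀ ε > (0 : ℝ), ∃ σ' > (0 : ℝ), ∀ σ : ℝ, 0 < σ → σ < σ' →
      (Finset.univ.sup' Finset.univ_nonempty fun p : S × A =>
        |Qstar p.1 p.2 - Qσstar σ p.1 p.2|) < ε :=
  optimal_q_uniform_convergence_general γ hγ0 hγ1 Rbar Pbar Rσ Pσ hPσ0 hPσ1 hR hP Qstar hQstar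
    Qσstar hQσstar
end
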